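/- arXiv:1808.03971 — 7 statements merged into one kernel-verified Lean document; each statement's English description precedes it below -/
import Mathlib

section
/- Let $\bar{\theta} \in (0,1)$ and define $\phi_{\bar{\theta}}(\eta) = 1$ if $|\eta| \geq \bar{\theta}$ and $\phi_{\bar{\theta}}(\eta) = (1 - \mathrm{sign}(\eta)\bar{\theta})/(1-\eta)$ if $|\eta| < \bar{\theta}$ (with $\mathrm{sign}(0)=1$). Then for all $\eta \in \mathbb{R}$, $|1 - \phi_{\bar{\theta}}(\eta)(1-\eta)| \geq \bar{\theta}$. -/
theorem stmt_0 (θb : ℝ) (hθb : θb ∈ Set.Ioo (0:ℝ) 1)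
    (φ : ℝ → ℝ)
    (hφ : ∀ η : ℝ, φ η =
      if |η| ≥ θb then 1 else (1 - (if 0 ≤ η then (1:ℝ) else -1) * θb) / (1 - η)) :
    ∀ η : ℝ, θb ≤ |1 - φ η * (1 - η)| := by
  intro η
  rw [hφ]
  by_cases hη : |η| ≥ θb
  · simp [hη]
  · have hη_ne_one : 1 - η ≠ 0 :=
      sub_ne_zero.mpr fun h => hη (by rw [← h, abs_one]; exact hθb.2.le)
    -- below the threshold φ is chosen so that 1 - φ η * (1 - η) = ± θb exactly
    rw [if_neg hη, div_mul_cancel₀ _ hη_ne_one, sub_sub_cancel, abs_mul]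
    split_ifs <;> simp [le_abs_self]
end

section
/- Let $\bar{\theta}, \tau \in (0,1)$, let $m_k \geq 0$, and let $B_k^0 = I$, with $B_k^{i+1} = B_k^i + (\tilde{y}_i - B_k^i s_i)\hat{s}_i^T/(\hat{s}_i^T s_i)$ for $i = 0, \dots, m_k - 1$, where $\tilde{y}_i = \theta_i y_i + (1-\theta_i) B_k^i s_i$ with $\theta_i = \phi_{\bar{\theta}}(\eta_i)$, $\eta_i = \hat{s}_i^T (B_k^i)^{-1} y_i / \|\hat{s}_i\|_2^2$, and $\hat{s}_i^T s_i = \|\hat{s}_i\|_2^2 > 0$. Then $|\det(B_k^{m_k})| \geq \bar{\theta}^{m_k} > 0$; in particular, $B_k^{m_k}$ is invertible. -/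
/-!
By the matrix determinant lemma, the rank-one update multiplies the determinant by
`1 + θᵢ (ηᵢ - 1)`: since `ŝᵢᵀ sᵢ = ‖ŝᵢ‖²`, the term `B sᵢ` contributes exactly `-1`. Powell's choice
of `θᵢ` makes this factor equal to `ηᵢ` when `|ηᵢ| ≥ θ̄` and to `±θ̄` otherwise, so every step
multiplies `|det B|` by at least `θ̄`, starting from `det I = 1`.
-/

open Matrix

theorem Matrix.det_add_vecMulVec {m α : Type*} [Fintype m] [DecidableEq m] [CommRing α]
    {A : Matrix m m α} (hA : IsUnit A.det) (u v : m → α) :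
    (A + vecMulVec u v).det = A.det * (1 + v ⬝ᵥ A⁻¹ *ᵥ u) := by
  rw [vecMulVec_eq Unit, det_add_replicateCol_mul_replicateRow hA, Matrix.mul_assoc,
    ← replicateCol_mulVec, det_unique (1 + _), add_apply, one_apply_eq,
    replicateRow_mul_replicateCol_apply]

noncomputable def powellPhi (θb η : ℝ) : ℝ :=
  if |η| ≥ θb then 1 else (1 - (if 0 ≤ η then (1:ℝ) else -1) * θb) / (1 - η)

theorem le_abs_one_add_powellPhi_mul {θb : ℝ} (h0 : 0 < θb) (h1 : θb < 1) (η : ℝ) :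
    θb ≤ |1 + powellPhi θb η * (η - 1)| := by
  unfold powellPhi
  split_ifs with hbig hnonneg
  · simpa using hbig
  all_goals
    have hη : 1 - η ≠ 0 := by
      have := (abs_lt.mp (not_le.mp hbig)).2
      linarith
  · rw [show 1 + (1 - 1 * θb) / (1 - η) * (η - 1) = θb by field_simp; ring, abs_of_pos h0]
  · rw [show 1 + (1 - -1 * θb) / (1 - η) * (η - 1) = -θb by field_simp; ring, abs_neg,
      abs_of_pos h0]

theorem det_powell_rank_one_update {n : Type*} [Fintype n] [DecidableEq n] {A : Matrix n n ℝ}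
    (hA : IsUnit A.det) {s y shat : n → ℝ} (hs : shat ⬝ᵥ s = shat ⬝ᵥ shat)
    (hshat : shat ⬝ᵥ shat ≠ 0) (θ : ℝ) :
    (A + (shat ⬝ᵥ s)⁻¹ • vecMulVec (θ • y + (1 - θ) • A *ᵥ s - A *ᵥ s) shat).det =
      A.det * (1 + θ * ((shat ⬝ᵥ A⁻¹ *ᵥ y) / (shat ⬝ᵥ shat) - 1)) := by
  have hcorr : θ • y + (1 - θ) • A *ᵥ s - A *ᵥ s = θ • (y - A *ᵥ s) := by
    rw [sub_smul, one_smul, smul_sub]; abel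
  have hcancel : A⁻¹ *ᵥ A *ᵥ s = s := by
    rw [mulVec_mulVec, nonsing_inv_mul _ hA, one_mulVec]
  rw [hcorr, ← smul_vecMulVec, det_add_vecMulVec hA, mulVec_smul, mulVec_smul,
    mulVec_sub, hcancel, dotProduct_smul, dotProduct_smul, dotProduct_sub, hs, smul_eq_mul,
    smul_eq_mul]
  field_simp

theorem stmt_3 (n : ℕ) (θb : ℝ) (hθb : θb ∈ Set.Ioo (0:ℝ) 1) (mk : ℕ)
    (s y shat : ℕ → (Fin n → ℝ))
    (hshat : ∀ i < mk, shat i ⬝ᵥ s i = shat i ⬝ᵥ shat i ∧ 0 < shat i ⬝ᵥ shat i)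
    (φ : ℝ → ℝ)
    (hφ : ∀ η : ℝ, φ η =
      if |η| ≥ θb then 1 else (1 - (if 0 ≤ η then (1:ℝ) else -1) * θb) / (1 - η))
    (B : ℕ → Matrix (Fin n) (Fin n) ℝ) (hB0 : B 0 = 1)
    (η θ : ℕ → ℝ)
    (hη : ∀ i < mk, η i = (shat i ⬝ᵥ ((B i)⁻¹.mulVec (y i))) / (shat i ⬝ᵥ shat i))
    (hθ : ∀ i < mk, θ i = φ (η i))
    (ytilde : ℕ → (Fin n → ℝ))
    (hyt : ∀ i < mk, ytilde i = θ i • y i + (1 - θ i) • (B i).mulVec (s i))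
    (hBsucc : ∀ i < mk, B (i + 1) =
      B i + (shat i ⬝ᵥ s i)⁻¹ • Matrix.vecMulVec (ytilde i - (B i).mulVec (s i)) (shat i)) :
    θb ^ mk ≤ |(B mk).det| ∧ 0 < θb ^ mk ∧ IsUnit (B mk).det := by
  obtain ⟨h0, h1⟩ := hθb
  have hφ_eq : φ = powellPhi θb := funext hφ
  have hpos : ∀ i, 0 < θb ^ i := pow_pos h0
  have hbound : ∀ i ≤ mk, θb ^ i ≤ |(B i).det| := by
    intro i hi
    induction i with
    | zero => simp [hB0]
    | succ i ih =>
      have hi : i < mk := hi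
      have ih := ih hi.le
      have hunit : IsUnit (B i).det :=
        isUnit_iff_ne_zero.mpr (abs_pos.mp ((hpos i).trans_le ih))
      obtain ⟨hs, hshat_pos⟩ := hshat i hi
      rw [hBsucc i hi, hyt i hi, det_powell_rank_one_update hunit hs hshat_pos.ne', ← hη i hi,
        hθ i hi, hφ_eq, abs_mul, pow_succ]
      exact mul_le_mul ih (le_abs_one_add_powellPhi_mul h0 h1 _) h0.le (abs_nonneg _)
  have hmk := hbound mk le_rfl
  exact ⟨hmk, hpos mk, isUnit_iff_ne_zero.mpr (abs_pos.mp ((hpos mk).trans_le hmk))⟩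
end

section
/- Let $f: \mathbb{R}^n \to \mathbb{R}^n$ be nonexpansive in the $\ell_2$-norm, $g(x) = x - f(x)$, and suppose the updates satisfy $\|\hat{s}_i\|_2 \geq \tau \|s_i\|_2$ for all $i$ and $m_k \leq m$ for all $k$, with $\theta_i \in [1-\bar{\theta}, 1+\bar{\theta}]$, where $s_i = x^{i+1} - x^i$, $y_i = g(x^{i+1}) - g(x^i)$, and $B_k$ is defined by the regularized rank-one update recursion starting from $B_k^0 = I$: $B_k^{i+1} = B_k^i + \theta_i(y_i - B_k^i s_i)\hat{s}_i^T/\|\hat{s}_i\|_2^2$. Then $\|B_k\|_2 \leq 3((1+\bar{\theta}+\tau)/\tau)^m - 2$. -/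
/-!
Each regularized rank-one update changes `B` by `θ (y - B s) ŝᵀ / ‖ŝ‖²`, whose operator norm is
`|θ| ‖y - B s‖ / ‖ŝ‖ ≤ (1 + θ̄) (2 + ‖B‖) / τ`, since `‖y‖ ≤ 2 ‖s‖` and `‖ŝ‖ ≥ τ ‖s‖`.
Hence `‖B‖ + 2` grows at most by the factor `1 + (1 + θ̄) / τ = (1 + θ̄ + τ) / τ` per update,
starting from `‖I‖ + 2 ≤ 3`, and there are at most `m` updates.
-/

theorem norm_sub_sub_sub_le_two_mul {E : Type*} [SeminormedAddCommGroup E] {f : E → E}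
    (hf : ∀ a b, ‖f a - f b‖ ≤ ‖a - b‖) (a b : E) :
    ‖(a - f a) - (b - f b)‖ ≤ 2 * ‖a - b‖ :=
  calc ‖(a - f a) - (b - f b)‖ = ‖(a - b) - (f a - f b)‖ := by congr 1; abel
    _ ≤ ‖a - b‖ + ‖f a - f b‖ := norm_sub_le _ _
    _ ≤ 2 * ‖a - b‖ := by linarith [hf a b]

theorem abs_le_of_mem_Icc_one_sub_one_add {θ t : ℝ} (h : θ ∈ Set.Icc (1 - t) (1 + t)) :
    |θ| ≤ 1 + t :=
  abs_le.2 ⟨by linarith [h.1], h.2⟩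

section RankOne

variable {E : Type*} [NormedAddCommGroup E] [InnerProductSpace ℝ E]

theorem norm_inv_sq_smul_innerSL_smulRight (u v : E) :
    ‖((‖u‖ ^ 2)⁻¹ • innerSL ℝ u).smulRight v‖ = ‖v‖ / ‖u‖ := by
  rw [ContinuousLinearMap.norm_smulRight_apply, norm_smul, innerSL_apply_norm, norm_inv,
    norm_pow, norm_norm]
  rcases eq_or_ne ‖u‖ 0 with hu | hu
  · simp [hu]
  · field_simp

theorem norm_rankOneUpdate_add_two_le {B : E →L[ℝ] E} {u s y : E} {θ Θ τ : ℝ} (hτ : 0 < τ)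
    (hθ : |θ| ≤ Θ) (hy : ‖y‖ ≤ 2 * ‖s‖) (hu : τ * ‖s‖ ≤ ‖u‖) :
    ‖B + θ • (((‖u‖ ^ 2)⁻¹ • innerSL ℝ u).smulRight (y - B s))‖ + 2 ≤
      (‖B‖ + 2) * (1 + Θ / τ) := by
  have hres : ‖y - B s‖ ≤ (‖B‖ + 2) * ‖s‖ := by
    linarith [norm_sub_le y (B s), B.le_opNorm s]
  have hratio : ‖y - B s‖ / ‖u‖ ≤ (‖B‖ + 2) / τ := by
    rcases (norm_nonneg u).eq_or_lt with hu0 | hu0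
    · rw [← hu0, div_zero]; positivity
    · rw [div_le_div_iff₀ hu0 hτ]
      nlinarith [norm_nonneg B]
  have hupdate : ‖θ • (((‖u‖ ^ 2)⁻¹ • innerSL ℝ u).smulRight (y - B s))‖ ≤
      Θ * ((‖B‖ + 2) / τ) := by
    rw [norm_smul, norm_inv_sq_smul_innerSL_smulRight, Real.norm_eq_abs]
    exact mul_le_mul hθ hratio (by positivity) ((abs_nonneg θ).trans hθ)
  calc _ ≤ ‖B‖ + Θ * ((‖B‖ + 2) / τ) + 2 := by gcongr; exact (norm_add_le _ _).trans (by gcongr)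
    _ = (‖B‖ + 2) * (1 + Θ / τ) := by ring

end RankOne

theorem stmt_4_general (n : ℕ) (θb τ : ℝ)
    (hτ : τ ∈ Set.Ioo (0:ℝ) 1) (m : ℕ)
    (f : EuclideanSpace ℝ (Fin n) → EuclideanSpace ℝ (Fin n))
    (hf : ∀ a b, ‖f a - f b‖ ≤ ‖a - b‖)
    (g : EuclideanSpace ℝ (Fin n) → EuclideanSpace ℝ (Fin n))
    (hg : ∀ a, g a = a - f a)
    (x : ℕ → EuclideanSpace ℝ (Fin n))
    (s y : ℕ → EuclideanSpace ℝ (Fin n))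
    (hs : ∀ i, s i = x (i + 1) - x i)
    (hy : ∀ i, y i = g (x (i + 1)) - g (x i))
    (shat : ℕ → EuclideanSpace ℝ (Fin n))
    (hshat : ∀ i, τ * ‖s i‖ ≤ ‖shat i‖)
    (θ : ℕ → ℝ) (hθ : ∀ i, θ i ∈ Set.Icc (1 - θb) (1 + θb))
    (k0 mk : ℕ) (hmk : mk ≤ m)
    (B : ℕ → (EuclideanSpace ℝ (Fin n) →L[ℝ] EuclideanSpace ℝ (Fin n)))
    (hB0 : B 0 = 1)
    (hBsucc : ∀ i < mk, B (i + 1) = B i +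
      θ i • (((‖shat (k0 + i)‖ ^ 2)⁻¹ • (innerSL ℝ (shat (k0 + i)))).smulRight
        (y (k0 + i) - B i (s (k0 + i))))) :
    ‖B mk‖ ≤ 3 * ((1 + θb + τ) / τ) ^ m - 2 := by
  have hτ0 := hτ.1
  have hθ_abs i := abs_le_of_mem_Icc_one_sub_one_add (hθ i)
  have hrate : (1 + θb + τ) / τ = 1 + (1 + θb) / τ := by field_simp; ring
  have hrate_ge_one : 1 ≤ (1 + θb + τ) / τ := by
    rw [hrate, le_add_iff_nonneg_right]
    exact div_nonneg ((abs_nonneg _).trans (hθ_abs 0)) hτ0.le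
  have hy_le i : ‖y i‖ ≤ 2 * ‖s i‖ := by
    simpa only [hy, hg, hs] using norm_sub_sub_sub_le_two_mul hf (x (i + 1)) (x i)
  have hgrowth : ‖B mk‖ + 2 ≤ ((1 + θb + τ) / τ) ^ mk * (‖B 0‖ + 2) :=
    le_geom (u := fun i ↦ ‖B i‖ + 2) (by linarith) mk fun i hi ↦ by
      rw [hBsucc i hi, hrate, mul_comm]
      exact norm_rankOneUpdate_add_two_le hτ0 (hθ_abs i) (hy_le _) (hshat _)
  have hB0_le : ‖B 0‖ ≤ 1 := hB0 ▸ ContinuousLinearMap.norm_id_le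
  have hpow := pow_le_pow_right₀ hrate_ge_one hmk
  nlinarith [pow_nonneg (zero_le_one.trans hrate_ge_one) mk]

theorem stmt_4 (n : ℕ) (θb τ : ℝ) (hθb : θb ∈ Set.Ioo (0:ℝ) 1)
    (hτ : τ ∈ Set.Ioo (0:ℝ) 1) (m : ℕ) (hm : 1 ≤ m)
    (f : EuclideanSpace ℝ (Fin n) → EuclideanSpace ℝ (Fin n))
    (hf : ∀ a b, ‖f a - f b‖ ≤ ‖a - b‖)
    (g : EuclideanSpace ℝ (Fin n) → EuclideanSpace ℝ (Fin n))
    (hg : ∀ a, g a = a - f a)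
    (x : ℕ → EuclideanSpace ℝ (Fin n))
    (s y : ℕ → EuclideanSpace ℝ (Fin n))
    (hs : ∀ i, s i = x (i + 1) - x i)
    (hy : ∀ i, y i = g (x (i + 1)) - g (x i))
    (shat : ℕ → EuclideanSpace ℝ (Fin n))
    (hshat : ∀ i, τ * ‖s i‖ ≤ ‖shat i‖)
    (θ : ℕ → ℝ) (hθ : ∀ i, θ i ∈ Set.Icc (1 - θb) (1 + θb))
    (k0 mk : ℕ) (hmk : mk ≤ m)
    (B : ℕ → (EuclideanSpace ℝ (Fin n) →L[ℝ] EuclideanSpace ℝ (Fin n)))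
    (hB0 : B 0 = 1)
    (hBsucc : ∀ i < mk, B (i + 1) = B i +
      θ i • (((‖shat (k0 + i)‖ ^ 2)⁻¹ • (innerSL ℝ (shat (k0 + i)))).smulRight
        (y (k0 + i) - B i (s (k0 + i))))) :
    ‖B mk‖ ≤ 3 * ((1 + θb + τ) / τ) ^ m - 2 :=
  stmt_4_general n θb τ hτ m f hf g hg x s y hs hy shat hshat θ hθ k0 mk hmk B hB0 hBsucc
end

section
/- Let $f: \mathbb{R}^n \to \mathbb{R}^n$ be nonexpansive in the $\ell_2$-norm with nonempty fixed-point set, and let $(x^k)$ be generated by the stabilized type-I Anderson acceleration (Algorithm AA-I-S-m): in each iteration $k$, either $x^{k+1} = x^k - H_k g(x^k)$ with $\|H_k\|_2 \leq C$ and $\|g(x^k)\|_2 \leq D\bar{U}(n_{AA}+1)^{-(1+\epsilon)}$ where $n_{AA}$ counts prior accelerated steps, or $x^{k+1} = (1-\alpha)x^k + \alpha f(x^k)$ with $\alpha \in (0,1)$. Then $x^k$ converges to a fixed point $x^\star = f(x^\star)$. -/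
/-!
A Krasnosel'skii–Mann step does not increase the distance to any fixed point, and an accelerated
step increases it by at most `C` times the residual bound; since the `j`-th accelerated step has
residual bound `D U (j + 1)^{-(1+ε)}`, these increments are summable (quasi-Fejér monotonicity).
So the iterates are bounded and their distance to each fixed point converges. The sharper
Krasnosel'skii–Mann estimate `‖x⁺ - y‖² + α(1-α)‖g x‖² ≤ ‖x - y‖²` makes the residuals
square-summable, hence a cluster point, which exists in finite dimension, is a fixed point; as the
distance to it converges along the whole sequence, the whole sequence converges to it.
-/

open Filter Topology Finset

theorem summable_ite_count {G : Type*} [AddCommGroup G] [UniformSpace G] [IsUniformAddGroup G]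
    [CompleteSpace G] {p : ℕ → Prop} [DecidablePred p] {a : ℕ → G} (ha : Summable a) :
    Summable fun k => if p k then a (Nat.count p k) else 0 := by
  have hinj : Function.Injective fun k : {k // p k} => Nat.count p k :=
    fun i j h => Subtype.ext (Nat.count_injective i.2 j.2 h)
  have hsub : Summable fun k : {k // p k} => a (Nat.count p k) := ha.comp_injective hinj
  refine ((summable_subtype_iff_indicator (s := {k | p k})
    (f := fun k => a (Nat.count p k))).mp hsub).congr fun k => ?_
  simp [Set.indicator_apply]

section RealSequence

variable {u e : ℕ → ℝ}

theorem le_add_sum_range_of_succ_le_add (h : ∀ k, u (k + 1) ≤ u k + e k) (n : ℕ) :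
    u n ≤ u 0 + ∑ k ∈ range n, e k := by
  induction n with
  | zero => simp
  | succ n ih => rw [sum_range_succ]; linarith [h n]

theorem le_add_tsum_of_succ_le_add (h : ∀ k, u (k + 1) ≤ u k + e k) (he0 : ∀ k, 0 ≤ e k)
    (he : Summable e) (n : ℕ) : u n ≤ u 0 + ∑' k, e k :=
  (le_add_sum_range_of_succ_le_add h n).trans <| by
    gcongr; exact he.sum_le_tsum _ fun k _ => he0 k

theorem exists_tendsto_of_succ_le_add (hu : BddBelow (Set.range u))
    (h : ∀ k, u (k + 1) ≤ u k + e k) (he0 : ∀ k, 0 ≤ e k) (he : Summable e) :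
    ∃ L, Tendsto u atTop (𝓝 L) := by
  set T : ℕ → ℝ := fun i => ∑' k, e (k + i)
  have hT0 : ∀ i, 0 ≤ T i := fun i => tsum_nonneg fun k => he0 _
  have hT : ∀ i, T i = e i + T (i + 1) := fun i => by
    simpa [T, add_assoc, add_comm 1] using ((summable_nat_add_iff i).mpr he).tsum_eq_zero_add
  have hanti : Antitone (u + T) :=
    antitone_nat_of_succ_le fun i => by simp only [Pi.add_apply]; linarith [h i, hT i]
  obtain ⟨m, hm⟩ := hu
  have hbdd : BddBelow (Set.range (u + T)) :=
    ⟨m, by rintro _ ⟨i, rfl⟩; simp only [Pi.add_apply]; linarith [hm ⟨i, rfl⟩, hT0 i]⟩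
  exact ⟨_, by simpa [T] using (tendsto_atTop_ciInf hanti hbdd).sub (tendsto_sum_nat_add e)⟩

theorem summable_of_succ_add_le {d w : ℕ → ℝ} (hd : ∀ k, 0 ≤ d k) (hw : ∀ k, 0 ≤ w k)
    (he0 : ∀ k, 0 ≤ e k) (he : Summable e) (h : ∀ k, d (k + 1) + w k ≤ d k + e k) :
    Summable w := by
  have hstep : ∀ k, d (k + 1) + ∑ j ∈ range (k + 1), w j ≤ d k + ∑ j ∈ range k, w j + e k :=
    fun k => by rw [sum_range_succ]; linarith [h k]
  refine summable_of_sum_range_le hw (c := d 0 + ∑' k, e k) fun n => ?_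
  have := le_add_tsum_of_succ_le_add (u := fun k => d k + ∑ j ∈ range k, w j) hstep he0 he n
  simp only [sum_range_zero, add_zero] at this
  linarith [hd n]

end RealSequence

section Safeguarded

variable {E : Type*} [NormedAddCommGroup E] [InnerProductSpace ℝ E]

theorem norm_one_sub_smul_add_smul_sq (t : ℝ) (u v : E) :
    ‖(1 - t) • u + t • v‖ ^ 2
      = (1 - t) * ‖u‖ ^ 2 + t * ‖v‖ ^ 2 - t * (1 - t) * ‖u - v‖ ^ 2 := by
  simp only [← real_inner_self_eq_norm_sq, inner_add_left, inner_add_right, inner_sub_left,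
    inner_sub_right, real_inner_smul_left, real_inner_smul_right, real_inner_comm u v]
  ring

theorem norm_sq_averaged_sub_add_le {f : E → E} (hf : LipschitzWith 1 f) {z : E} (hz : f z = z)
    {α : ℝ} (hα : α ∈ Set.Icc 0 1) (u : E) :
    ‖(1 - α) • u + α • f u - z‖ ^ 2 + α * (1 - α) * ‖u - f u‖ ^ 2 ≤ ‖u - z‖ ^ 2 := by
  obtain ⟨hα0, hα1⟩ := hα
  have hfu : ‖f u - z‖ ≤ ‖u - z‖ := by simpa [hz] using hf.norm_sub_le u z
  have hsplit := norm_one_sub_smul_add_smul_sq α (u - z) (f u - z)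
  rw [sub_sub_sub_cancel_right, smul_sub, smul_sub, sub_add_sub_comm, ← add_smul,
    sub_add_cancel, one_smul] at hsplit
  rw [hsplit]
  nlinarith [pow_le_pow_left₀ (norm_nonneg _) hfu 2]

/-- A Krasnosel'skii–Mann step, or an accelerated step `u - H g(u)` with residual
`g(u) = u - f u` bounded by `b`. -/
def SafeguardedStep (f : E → E) (α C b : ℝ) (u v : E) : Prop :=
  v = (1 - α) • u + α • f u ∨ ∃ H : E →L[ℝ] E, ‖H‖ ≤ C ∧ v = u - H (u - f u) ∧ ‖u - f u‖ ≤ b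

namespace SafeguardedStep

variable {f : E → E} {α C b : ℝ} {u v z : E}

theorem norm_sub_le (h : SafeguardedStep f α C b u v) (hf : LipschitzWith 1 f) (hz : f z = z)
    (hα : α ∈ Set.Icc 0 1) (hC : 0 ≤ C) (hb : 0 ≤ b) : ‖v - z‖ ≤ ‖u - z‖ + C * b := by
  rcases h with rfl | ⟨H, hH, rfl, hres⟩
  · have hres0 : 0 ≤ α * (1 - α) * ‖u - f u‖ ^ 2 :=
      mul_nonneg (mul_nonneg hα.1 (sub_nonneg.2 hα.2)) (sq_nonneg _)
    have : ‖(1 - α) • u + α • f u - z‖ ≤ ‖u - z‖ :=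
      pow_le_pow_iff_left₀ (norm_nonneg _) (norm_nonneg _) two_ne_zero |>.mp <| by
        linarith [norm_sq_averaged_sub_add_le hf hz hα u]
    linarith [mul_nonneg hC hb]
  · calc ‖u - H (u - f u) - z‖ = ‖(u - z) - H (u - f u)‖ := by rw [sub_right_comm]
      _ ≤ ‖u - z‖ + ‖H‖ * ‖u - f u‖ := (norm_sub_le _ _).trans (by gcongr; exact H.le_opNorm _)
      _ ≤ ‖u - z‖ + C * b := by gcongr

theorem norm_sq_sub_add_le (h : SafeguardedStep f α C b u v) (hf : LipschitzWith 1 f)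
    (hz : f z = z) (hα : α ∈ Set.Icc 0 1) (hC : 0 ≤ C) (hb : 0 ≤ b) :
    ‖v - z‖ ^ 2 + α * (1 - α) * ‖u - f u‖ ^ 2
      ≤ ‖u - z‖ ^ 2 + (C * (2 * ‖u - z‖ + C * b) + b) * b := by
  have hdist := h.norm_sub_le hf hz hα hC hb
  obtain ⟨hα0, hα1⟩ := hα
  rcases h with rfl | ⟨H, hH, rfl, hres⟩
  · have : 0 ≤ (C * (2 * ‖u - z‖ + C * b) + b) * b := by positivity
    linarith [norm_sq_averaged_sub_add_le hf hz ⟨hα0, hα1⟩ u]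
  · have hres_sq : α * (1 - α) * ‖u - f u‖ ^ 2 ≤ b ^ 2 :=
      calc α * (1 - α) * ‖u - f u‖ ^ 2 ≤ 1 * ‖u - f u‖ ^ 2 := by gcongr; nlinarith
        _ ≤ b ^ 2 := by rw [one_mul]; exact pow_le_pow_left₀ (norm_nonneg _) hres 2
    nlinarith [pow_le_pow_left₀ (norm_nonneg _) hdist 2]

end SafeguardedStep

variable {f : E → E} {α C : ℝ} {b : ℕ → ℝ} {x : ℕ → E} {z : E}

theorem norm_sub_le_of_safeguardedStep (hx : ∀ k, SafeguardedStep f α C (b k) (x k) (x (k + 1)))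
    (hf : LipschitzWith 1 f) (hz : f z = z) (hα : α ∈ Set.Icc 0 1) (hC : 0 ≤ C)
    (hb0 : ∀ k, 0 ≤ b k) (hb : Summable b) (k : ℕ) :
    ‖x k - z‖ ≤ ‖x 0 - z‖ + ∑' j, C * b j :=
  le_add_tsum_of_succ_le_add (u := fun k => ‖x k - z‖)
    (fun k => (hx k).norm_sub_le hf hz hα hC (hb0 k)) (fun j => mul_nonneg hC (hb0 j))
    (hb.mul_left C) k

theorem tendsto_norm_sub_apply_of_safeguardedStep
    (hx : ∀ k, SafeguardedStep f α C (b k) (x k) (x (k + 1))) (hf : LipschitzWith 1 f)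
    (hz : f z = z) (hα : α ∈ Set.Ioo 0 1) (hC : 0 ≤ C) (hb0 : ∀ k, 0 ≤ b k) (hb : Summable b) :
    Tendsto (fun k => ‖x k - f (x k)‖) atTop (𝓝 0) := by
  obtain ⟨hα0, hα1⟩ := hα
  have hα' : α ∈ Set.Icc 0 1 := ⟨hα0.le, hα1.le⟩
  set R := ‖x 0 - z‖ + ∑' j, C * b j
  set B := ∑' j, b j
  have hR : 0 ≤ R :=
    (norm_nonneg _).trans (norm_sub_le_of_safeguardedStep hx hf hz hα' hC hb0 hb 0)
  have hB : 0 ≤ B := tsum_nonneg hb0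
  have hK : 0 ≤ C * (2 * R + C * B) + B :=
    add_nonneg (mul_nonneg hC (add_nonneg (by linarith) (mul_nonneg hC hB))) hB
  have hsum : Summable fun k => α * (1 - α) * ‖x k - f (x k)‖ ^ 2 := by
    refine summable_of_succ_add_le (d := fun k => ‖x k - z‖ ^ 2)
      (e := fun k => (C * (2 * R + C * B) + B) * b k) (fun k => sq_nonneg _)
      (fun k => mul_nonneg (mul_nonneg hα0.le (sub_nonneg.2 hα1.le)) (sq_nonneg _))
      (fun k => mul_nonneg hK (hb0 k)) (hb.mul_left _) fun k => ?_
    have hbB : b k ≤ B := hb.le_tsum k fun j _ => hb0 j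
    have hxR : ‖x k - z‖ ≤ R := norm_sub_le_of_safeguardedStep hx hf hz hα' hC hb0 hb k
    refine ((hx k).norm_sq_sub_add_le hf hz hα' hC (hb0 k)).trans ?_
    gcongr
    exact hb0 k
  have hsq := ((summable_mul_left_iff (mul_pos hα0 (sub_pos.2 hα1)).ne').mp hsum).tendsto_atTop_zero
  simpa using hsq.sqrt

theorem exists_tendsto_fixedPoint_of_safeguardedStep [ProperSpace E]
    (hx : ∀ k, SafeguardedStep f α C (b k) (x k) (x (k + 1))) (hf : LipschitzWith 1 f)
    (hfix : ∃ y, f y = y) (hα : α ∈ Set.Ioo 0 1) (hC : 0 ≤ C) (hb0 : ∀ k, 0 ≤ b k)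
    (hb : Summable b) : ∃ xstar, f xstar = xstar ∧ Tendsto x atTop (𝓝 xstar) := by
  obtain ⟨y, hy⟩ := hfix
  have hα' : α ∈ Set.Icc 0 1 := Set.Ioo_subset_Icc_self hα
  obtain ⟨xstar, -, φ, hφ, hxφ⟩ :=
    tendsto_subseq_of_bounded (Metric.isBounded_closedBall (x := y)) fun k =>
      mem_closedBall_iff_norm.2 (norm_sub_le_of_safeguardedStep hx hf hy hα' hC hb0 hb k)
  have hxstar : f xstar = xstar := by
    have hres := (tendsto_norm_sub_apply_of_safeguardedStep hx hf hy hα hC hb0 hb).comp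
      hφ.tendsto_atTop
    have hlim : Tendsto (fun k => x (φ k) - f (x (φ k))) atTop (𝓝 (xstar - f xstar)) :=
      hxφ.sub ((hf.continuous.tendsto xstar).comp hxφ)
    exact (sub_eq_zero.1 (norm_eq_zero.1 (tendsto_nhds_unique hlim.norm hres))).symm
  obtain ⟨L, hL⟩ := exists_tendsto_of_succ_le_add (u := fun k => ‖x k - xstar‖)
    ⟨0, by rintro _ ⟨k, rfl⟩; exact norm_nonneg _⟩
    (fun k => (hx k).norm_sub_le hf hxstar hα' hC (hb0 k)) (fun k => mul_nonneg hC (hb0 k))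
    (hb.mul_left C)
  have hL0 : L = 0 := tendsto_nhds_unique (hL.comp hφ.tendsto_atTop) <| by
    simpa [Function.comp_def] using (hxφ.sub_const xstar).norm
  exact ⟨xstar, hxstar, tendsto_iff_norm_sub_tendsto_zero.2 (hL0 ▸ hL)⟩

end Safeguarded

theorem stmt_9 (n : ℕ) (C D U ε α : ℝ)
    (hC : 0 < C) (hD : 0 < D) (hU : 0 < U) (hε : 0 < ε) (hα : α ∈ Set.Ioo (0:ℝ) 1)
    (f : EuclideanSpace ℝ (Fin n) → EuclideanSpace ℝ (Fin n))
    (hf : ∀ a b, ‖f a - f b‖ ≤ ‖a - b‖)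
    (hfix : ∃ y, f y = y)
    (g : EuclideanSpace ℝ (Fin n) → EuclideanSpace ℝ (Fin n))
    (hg : ∀ a, g a = a - f a)
    (x : ℕ → EuclideanSpace ℝ (Fin n))
    (acc : ℕ → Bool)
    (nAA : ℕ → ℕ)
    (hnAA : ∀ k, nAA k = ((Finset.range k).filter (fun j => acc j = true)).card)
    (hacc : ∀ k, acc k = true →
      (∃ H : EuclideanSpace ℝ (Fin n) →L[ℝ] EuclideanSpace ℝ (Fin n),
        ‖H‖ ≤ C ∧ x (k + 1) = x k - H (g (x k))) ∧
      ‖g (x k)‖ ≤ D * U * ((nAA k : ℝ) + 1) ^ (-(1 + ε)))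
    (hkm : ∀ k, acc k = false → x (k + 1) = (1 - α) • x k + α • f (x k)) :
    ∃ xstar, f xstar = xstar ∧ Filter.Tendsto x Filter.atTop (nhds xstar) := by
  have hcount : nAA = Nat.count (fun j => acc j = true) :=
    funext fun k => by rw [hnAA, Nat.count_eq_card_filter_range]
  set b : ℕ → ℝ := fun k => if acc k = true then D * U * ((nAA k : ℝ) + 1) ^ (-(1 + ε)) else 0
  have hb : Summable b := by
    have hp : Summable fun m : ℕ => ((m : ℝ) + 1) ^ (-(1 + ε)) := by
      simpa using (summable_nat_add_iff 1).2 (Real.summable_nat_rpow.2 (by linarith))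
    simpa only [b, hcount] using summable_ite_count (hp.mul_left (D * U))
  refine exists_tendsto_fixedPoint_of_safeguardedStep (fun k => ?_)
    (LipschitzWith.of_dist_le_mul fun a b => by simpa [dist_eq_norm] using hf a b) hfix hα hC.le
    (fun k => by dsimp only [b]; split_ifs <;> positivity) hb
  cases hk : acc k
  · exact .inl (hkm k hk)
  · obtain ⟨⟨H, hH, hstep⟩, hres⟩ := hacc k hk
    exact .inr ⟨H, hH, by rw [hstep, hg], by simpa [b, hk, hg] using hres⟩
end

section
/- Let $\|\cdot\|$ be any norm on $\mathbb{R}^n$ and $f: \mathbb{R}^n \to \mathbb{R}^n$ be $\gamma$-contractive in $\|\cdot\|$ with $\gamma \in (0,1)$ and fixed point $y$. Suppose $(x^k)$ satisfies: for $k$ in an index set $K_{AA}$ (enumerated $k_0 < k_1 < \dots$), $\|x^{k_i+1} - y\| \leq \|x^{k_i} - y\| + \epsilon'_{k_i}$ with $\sum_i \epsilon'_{k_i} < \infty$; and for all other $k$, $\|x^{k+1} - y\| \leq \gamma\|x^k - y\|$, with infinitely many indices of the latter type, including $k = 0$. Then $\lim_{k\to\infty} x^k = y$. -/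
/-!
With `e k = N (x k - y)`, every step satisfies `e (k + 1) ≤ e k + ε' k` (for a contraction step
because `γ < 1` and `ε' k ≥ 0`), so `e k + ∑_{j ≥ k} ε' j` is nonincreasing and bounded below;
as the tails vanish, `e` converges to some `L ≥ 0`. Passing to the limit along the infinitely
many contraction steps gives `L ≤ γ L`, hence `L = 0`. Finally, in finite dimension `N`
dominates the Euclidean norm.
-/

open Filter Topology

section QuasiFejer

variable {e ε : ℕ → ℝ}

theorem antitone_add_tsum_nat_add (hε : Summable ε) (hstep : ∀ k, e (k + 1) ≤ e k + ε k) :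
    Antitone fun k => e k + ∑' j, ε (j + k) := by
  refine antitone_nat_of_succ_le fun k => ?_
  have htail : ∑' j, ε (j + k) = ε k + ∑' j, ε (j + (k + 1)) := by
    simpa [add_right_comm _ 1 k, add_assoc] using
      ((summable_nat_add_iff k).mpr hε).tsum_eq_zero_add
  linarith [hstep k]

theorem exists_tendsto_of_le_add_of_summable (he : ∀ k, 0 ≤ e k) (hε : Summable ε)
    (hstep : ∀ k, e (k + 1) ≤ e k + ε k) : ∃ L, Tendsto e atTop (𝓝 L) := by
  have htail : Tendsto (fun k => ∑' j, ε (j + k)) atTop (𝓝 0) := tendsto_sum_nat_add ε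
  obtain ⟨b, hb⟩ := htail.bddBelow_range
  have hbdd : BddBelow (Set.range fun k => e k + ∑' j, ε (j + k)) :=
    ⟨b, by rintro _ ⟨k, rfl⟩; linarith [he k, hb ⟨k, rfl⟩]⟩
  have hu := tendsto_atTop_ciInf (antitone_add_tsum_nat_add hε hstep) hbdd
  exact ⟨_, by simpa using hu.sub htail⟩

theorem tendsto_zero_of_le_add_of_frequently_le_mul {γ : ℝ} (hγ : γ < 1)
    (he : ∀ k, 0 ≤ e k) (hε : Summable ε) (hstep : ∀ k, e (k + 1) ≤ e k + ε k)
    (hcontr : ∃ᶠ k in atTop, e (k + 1) ≤ γ * e k) : Tendsto e atTop (𝓝 0) := by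
  obtain ⟨L, hL⟩ := exists_tendsto_of_le_add_of_summable he hε hstep
  have hL0 : 0 ≤ L := ge_of_tendsto' hL he
  have hLγ : L ≤ γ * L :=
    le_of_tendsto_of_tendsto_of_frequently (hL.comp (tendsto_add_atTop_nat 1)) (hL.const_mul γ)
      hcontr
  obtain rfl : L = 0 := by nlinarith
  exact hL

end QuasiFejer

/-- A copy of `E` on which a second norm can be installed. -/
def Renormed (E : Type*) : Type _ := E

theorem exists_norm_le_mul_of_norm_axioms {E : Type*} [NormedAddCommGroup E] [NormedSpace ℝ E]
    [FiniteDimensional ℝ E] (N : E → ℝ) (hNeq : ∀ v, N v = 0 ↔ v = 0)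
    (hNsmul : ∀ (a : ℝ) v, N (a • v) = |a| * N v) (hNadd : ∀ u v, N (u + v) ≤ N u + N v) :
    ∃ C, ∀ v, ‖v‖ ≤ C * N v := by
  let _ : AddCommGroup (Renormed E) := inferInstanceAs (AddCommGroup E)
  let _ : Module ℝ (Renormed E) := inferInstanceAs (Module ℝ E)
  let _ : NormedAddCommGroup (Renormed E) := AddGroupNorm.toNormedAddCommGroup
    { toFun := N
      map_zero' := (hNeq 0).2 rfl
      add_le' := hNadd
      neg' := fun v =>
        (congrArg N (neg_one_smul ℝ v).symm).trans ((hNsmul (-1) v).trans (by simp))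
      eq_zero_of_map_eq_zero' := fun v => (hNeq v).1 }
  let _ : NormedSpace ℝ (Renormed E) := ⟨fun a v => (hNsmul a v).le⟩
  have _ : FiniteDimensional ℝ (Renormed E) := inferInstanceAs (FiniteDimensional ℝ E)
  let T : Renormed E →L[ℝ] E := LinearMap.toContinuousLinearMap LinearMap.id
  exact ⟨‖T‖, T.le_opNorm⟩

theorem stmt_11_general (n : ℕ) (γ : ℝ) (hγ : γ ∈ Set.Ioo (0:ℝ) 1)
    (N : EuclideanSpace ℝ (Fin n) → ℝ)
    (hN0 : ∀ v, 0 ≤ N v)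
    (hNeq : ∀ v, N v = 0 ↔ v = 0)
    (hNsmul : ∀ (a : ℝ) v, N (a • v) = |a| * N v)
    (hNadd : ∀ u v, N (u + v) ≤ N u + N v)
    (y : EuclideanSpace ℝ (Fin n))
    (x : ℕ → EuclideanSpace ℝ (Fin n))
    (acc : ℕ → Bool) (ε' : ℕ → ℝ)
    (hε'0 : ∀ k, 0 ≤ ε' k) (hε'sum : Summable ε')
    (hacc : ∀ k, acc k = true → N (x (k + 1) - y) ≤ N (x k - y) + ε' k)
    (hkm : ∀ k, acc k = false → N (x (k + 1) - y) ≤ γ * N (x k - y))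
    (hinf : {k | acc k = false}.Infinite) :
    Filter.Tendsto x Filter.atTop (nhds y) := by
  have hstep : ∀ k, N (x (k + 1) - y) ≤ N (x k - y) + ε' k := by
    intro k
    cases hk : acc k
    · nlinarith [hkm k hk, hN0 (x k - y), hε'0 k, hγ.2]
    · exact hacc k hk
  have hcontr : ∃ᶠ k in atTop, N (x (k + 1) - y) ≤ γ * N (x k - y) :=
    (Nat.frequently_atTop_iff_infinite.2 hinf).mono hkm
  have hN : Tendsto (fun k => N (x k - y)) atTop (𝓝 0) :=
    tendsto_zero_of_le_add_of_frequently_le_mul hγ.2 (fun k => hN0 _) hε'sum hstep hcontr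
  obtain ⟨C, hC⟩ := exists_norm_le_mul_of_norm_axioms N hNeq hNsmul hNadd
  rw [tendsto_iff_norm_sub_tendsto_zero]
  exact squeeze_zero (fun k => norm_nonneg _) (fun k => hC _) (by simpa using hN.const_mul C)

theorem stmt_11 (n : ℕ) (γ : ℝ) (hγ : γ ∈ Set.Ioo (0:ℝ) 1)
    (N : EuclideanSpace ℝ (Fin n) → ℝ)
    (hN0 : ∀ v, 0 ≤ N v)
    (hNeq : ∀ v, N v = 0 ↔ v = 0)
    (hNsmul : ∀ (a : ℝ) v, N (a • v) = |a| * N v)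
    (hNadd : ∀ u v, N (u + v) ≤ N u + N v)
    (f : EuclideanSpace ℝ (Fin n) → EuclideanSpace ℝ (Fin n))
    (hf : ∀ a b, N (f a - f b) ≤ γ * N (a - b))
    (y : EuclideanSpace ℝ (Fin n)) (hy : f y = y)
    (x : ℕ → EuclideanSpace ℝ (Fin n))
    (acc : ℕ → Bool) (ε' : ℕ → ℝ)
    (hε'0 : ∀ k, 0 ≤ ε' k) (hε'sum : Summable ε')
    (hacc : ∀ k, acc k = true → N (x (k + 1) - y) ≤ N (x k - y) + ε' k)
    (hkm : ∀ k, acc k = false → N (x (k + 1) - y) ≤ γ * N (x k - y))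
    (hinf : {k | acc k = false}.Infinite)
    (h0 : acc 0 = false) :
    Filter.Tendsto x Filter.atTop (nhds y) :=
  stmt_11_general n γ hγ N hN0 hNeq hNsmul hNadd y x acc ε' hε'0 hε'sum hacc hkm hinf
end

section
/- Let $Q \in \mathbb{R}^{N\times N}$ be skew-symmetric ($Q^T = -Q$), let $\mathcal{C} \subseteq \mathbb{R}^N$ be a nonempty closed convex cone with dual cone $\mathcal{C}^*$. If $u, v \in \mathbb{R}^N$ satisfy $Qu = v$, $u \in \mathcal{C}$, $v \in \mathcal{C}^*$, then $\Pi_{\mathcal{C}}(u - v) = u$, where $\Pi_{\mathcal{C}}$ is the Euclidean projection onto $\mathcal{C}$. -/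
/-!
Skew-symmetry gives `⟪u, v⟫ = ⟪u, Q u⟫ = 0`, so for every `w` in the cone
`‖u - v - w‖² = ‖u - w‖² + ‖v‖² + 2 ⟪v, w⟫ ≥ ‖v‖² = ‖(u - v) - u‖²`, using `v ∈ C*`;
equality forces `‖u - w‖ = 0`, i.e. `w = u`.
-/

open RealInnerProductSpace
open scoped Matrix

theorem Matrix.inner_toEuclideanLin_self_eq_zero {n : Type*} [Fintype n] [DecidableEq n]
    {Q : Matrix n n ℝ} (hQ : Qᵀ = -Q) (x : EuclideanSpace ℝ n) :
    ⟪Matrix.toEuclideanLin Q x, x⟫ = 0 := by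
  have hskew : ⟪Matrix.toEuclideanLin Q x, x⟫ = -⟪Matrix.toEuclideanLin Q x, x⟫ :=
    calc ⟪Matrix.toEuclideanLin Q x, x⟫ = ⟪x, Matrix.toEuclideanLin Qᴴ x⟫ := by
          rw [Matrix.toEuclideanLin_conjTranspose_eq_adjoint, LinearMap.adjoint_inner_right]
      _ = -⟪Matrix.toEuclideanLin Q x, x⟫ := by
          rw [Matrix.conjTranspose_eq_transpose_of_trivial, hQ, map_neg, LinearMap.neg_apply,
            inner_neg_right, real_inner_comm]
  linarith

section

variable {E : Type*} [NormedAddCommGroup E] [InnerProductSpace ℝ E] {u v w : E}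

theorem norm_sub_sub_sq_of_inner_eq_zero (huv : ⟪u, v⟫ = 0) (w : E) :
    ‖u - v - w‖ ^ 2 = ‖u - w‖ ^ 2 + ‖v‖ ^ 2 + 2 * ⟪v, w⟫ := by
  rw [show u - v - w = (u - w) - v by abel, norm_sub_sq_real, inner_sub_left, huv,
    real_inner_comm w]
  ring

theorem norm_le_norm_sub_sub (huv : ⟪u, v⟫ = 0) (hvw : 0 ≤ ⟪v, w⟫) :
    ‖v‖ ≤ ‖u - v - w‖ := by
  refine le_of_sq_le_sq ?_ (norm_nonneg _)
  rw [norm_sub_sub_sq_of_inner_eq_zero huv]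
  nlinarith [sq_nonneg ‖u - w‖]

theorem eq_of_norm_eq_norm_sub_sub (huv : ⟪u, v⟫ = 0) (hvw : 0 ≤ ⟪v, w⟫)
    (h : ‖v‖ = ‖u - v - w‖) : w = u := by
  have hsq := norm_sub_sub_sq_of_inner_eq_zero huv w
  rw [← h] at hsq
  have : ‖u - w‖ ^ 2 = 0 := by nlinarith [sq_nonneg ‖u - w‖]
  exact (sub_eq_zero.mp (norm_eq_zero.mp (pow_eq_zero_iff two_ne_zero |>.mp this))).symm

end

theorem stmt_13_general (N : ℕ) (Q : Matrix (Fin N) (Fin N) ℝ) (hQ : Q.transpose = -Q)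
    (C : Set (EuclideanSpace ℝ (Fin N)))
    (u v : EuclideanSpace ℝ (Fin N))
    (hQu : Matrix.toEuclideanLin Q u = v)
    (hu : u ∈ C)
    (hv : ∀ w ∈ C, 0 ≤ ⟪v, w⟫) :
    u ∈ C ∧ (∀ w ∈ C, ‖(u - v) - u‖ ≤ ‖(u - v) - w‖) ∧
      (∀ w ∈ C, ‖(u - v) - u‖ = ‖(u - v) - w‖ → w = u) := by
  have huv : ⟪u, v⟫ = 0 := by
    rw [real_inner_comm, ← hQu]
    exact Matrix.inner_toEuclideanLin_self_eq_zero hQ u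
  have hself : (u - v) - u = -v := by abel
  refine ⟨hu, fun w hw => ?_, fun w hw h => ?_⟩
  · rw [hself, norm_neg]
    exact norm_le_norm_sub_sub huv (hv w hw)
  · rw [hself, norm_neg] at h
    exact eq_of_norm_eq_norm_sub_sub huv (hv w hw) h

theorem stmt_13 (N : ℕ) (Q : Matrix (Fin N) (Fin N) ℝ) (hQ : Q.transpose = -Q)
    (C : Set (EuclideanSpace ℝ (Fin N)))
    (hCne : C.Nonempty) (hCclosed : IsClosed C) (hCconvex : Convex ℝ C)
    (hCcone : ∀ c ∈ C, ∀ t : ℝ, 0 ≤ t → t • c ∈ C)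
    (u v : EuclideanSpace ℝ (Fin N))
    (hQu : Matrix.toEuclideanLin Q u = v)
    (hu : u ∈ C)
    (hv : ∀ w ∈ C, 0 ≤ ⟪v, w⟫) :
    u ∈ C ∧ (∀ w ∈ C, ‖(u - v) - u‖ ≤ ‖(u - v) - w‖) ∧
      (∀ w ∈ C, ‖(u - v) - u‖ = ‖(u - v) - w‖ → w = u) :=
  stmt_13_general N Q hQ C u v hQu hu hv
end

section
/- Let $s_0, \dots, s_{m-1} \in \mathbb{R}^n$ be linearly independent, let $\hat{s}_0, \dots, \hat{s}_{m-1}$ be their Gram-Schmidt orthogonalization (without normalization), and let $y_0, \dots, y_{m-1} \in \mathbb{R}^n$. Define $B^0 = I$ and $B^{i+1} = B^i + (y_i - B^i s_i)\hat{s}_i^T/(\hat{s}_i^T s_i)$ for $i = 0, \dots, m-1$. Then $B^m = I + (Y - S)(S^T S)^{-1} S^T$, where $S = [s_0 \cdots s_{m-1}]$ and $Y = [y_0 \cdots y_{m-1}]$; i.e., $B^m$ satisfies $B^m S = Y$ and $B^m z = z$ for all $z \perp \mathrm{span}(S)$. -/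
/-!
The recursion defining `ŝ` is Mathlib's `gramSchmidt`, transported to `EuclideanSpace`, so
`ŝᵢ ⬝ sⱼ = 0` for `j < i`, `ŝᵢ ⬝ sᵢ = ‖ŝᵢ‖² ≠ 0`, and `ŝᵢ ∈ span s`. Hence the `i`-th rank-one
update keeps `B sⱼ = yⱼ` for `j < i`, enforces `B sᵢ = yᵢ`, and does not act on `ŝᵢ^⊥`; so
`Bᵐ S = Y` and `Bᵐ z = z` for `z ⊥ span S`. These two conditions determine `Bᵐ`: with
`P = S (SᵀS)⁻¹ Sᵀ` (the Gram matrix `SᵀS` is positive definite), the columns of `1 - P` are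
orthogonal to `span S`, so `Bᵐ = Bᵐ P + Bᵐ (1 - P) = Y (SᵀS)⁻¹ Sᵀ + 1 - P`.
-/

open Matrix InnerProductSpace

section GramSchmidt

variable {𝕜 E ι : Type*} [RCLike 𝕜] [NormedAddCommGroup E] [InnerProductSpace 𝕜 E]
  [LinearOrder ι] [LocallyFiniteOrderBot ι] [WellFoundedLT ι]

theorem inner_gramSchmidt_self_eq_inner_self (f : ι → E) (i : ι) :
    inner 𝕜 (gramSchmidt 𝕜 f i) (f i) = inner 𝕜 (gramSchmidt 𝕜 f i) (gramSchmidt 𝕜 f i) := by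
  conv_lhs => rw [gramSchmidt_def'' 𝕜 f i]
  rw [inner_add_right, inner_sum, Finset.sum_eq_zero fun j hj => ?_, add_zero]
  rw [inner_smul_right, gramSchmidt_orthogonal 𝕜 f (Finset.mem_Iio.mp hj).ne', mul_zero]

end GramSchmidt

section

variable {n : Type*} [Fintype n] {m : ℕ}

def IsGramSchmidt (s shat : Fin m → n → ℝ) : Prop :=
  ∀ i, shat i = s i -
    ∑ j ∈ Finset.univ.filter (fun j => j < i), ((shat j ⬝ᵥ s i) / (shat j ⬝ᵥ shat j)) • shat j

namespace IsGramSchmidt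

variable {s shat : Fin m → n → ℝ}

theorem eq_gramSchmidt (h : IsGramSchmidt s shat) (i : Fin m) :
    shat i = (gramSchmidt ℝ (fun j => WithLp.toLp 2 (s j)) i).ofLp := by
  induction i using WellFoundedLT.induction with | _ i ih =>
  rw [h i, Finset.filter_gt_eq_Iio, eq_sub_of_add_eq
    (gramSchmidt_def'' ℝ (fun j => WithLp.toLp 2 (s j)) i).symm]
  simp only [WithLp.ofLp_sub, WithLp.ofLp_sum, WithLp.ofLp_smul]
  congr 1
  refine Finset.sum_congr rfl fun j hj => ?_
  rw [ih j (Finset.mem_Iio.mp hj)]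
  simp only [RCLike.ofReal_real_eq_id, id, ← real_inner_self_eq_norm_sq,
    EuclideanSpace.inner_eq_star_dotProduct, star_trivial, dotProduct_comm (s i)]

theorem dotProduct_eq_zero_of_lt (h : IsGramSchmidt s shat) {i j : Fin m} (hji : j < i) :
    shat i ⬝ᵥ s j = 0 := by
  simpa [h.eq_gramSchmidt, EuclideanSpace.inner_eq_star_dotProduct, dotProduct_comm] using
    gramSchmidt_inv_triangular ℝ (fun j => WithLp.toLp 2 (s j)) hji

theorem dotProduct_self_ne_zero (hli : LinearIndependent ℝ s) (h : IsGramSchmidt s shat)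
    (i : Fin m) : shat i ⬝ᵥ s i ≠ 0 := by
  have hli' : LinearIndependent ℝ fun j => WithLp.toLp 2 (s j) :=
    hli.map' (WithLp.linearEquiv 2 ℝ (n → ℝ)).symm.toLinearMap (LinearEquiv.ker _)
  have hgs := (inner_self_ne_zero (𝕜 := ℝ)).mpr (gramSchmidt_ne_zero i hli')
  rw [← inner_gramSchmidt_self_eq_inner_self] at hgs
  simpa [h.eq_gramSchmidt, EuclideanSpace.inner_eq_star_dotProduct, dotProduct_comm] using hgs

theorem dotProduct_eq_zero_of_orthogonal (h : IsGramSchmidt s shat) {z : n → ℝ}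
    (hz : ∀ j, s j ⬝ᵥ z = 0) (i : Fin m) : shat i ⬝ᵥ z = 0 := by
  induction i using WellFoundedLT.induction with | _ i ih =>
  rw [h i, sub_dotProduct, sum_dotProduct, hz i, Finset.sum_eq_zero fun j hj => ?_, sub_zero]
  rw [smul_dotProduct, ih j (by simpa using hj), smul_zero]

end IsGramSchmidt

section RankOneUpdate

variable {R : Type*} [CommRing R]

theorem add_smul_vecMulVec_mulVec (B : Matrix n n R) (c : R) (u w v : n → R) :
    (B + c • vecMulVec u w) *ᵥ v = B *ᵥ v + (c * (w ⬝ᵥ v)) • u := by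
  rw [add_mulVec, smul_mulVec, vecMulVec_mulVec, op_smul_eq_smul, smul_smul]

variable {K : Type*} [Field K] {s y shat : Fin m → n → K} {B : ℕ → Matrix n n K}

theorem mulVec_eq_self_of_rankOneUpdate [DecidableEq n] (hB0 : B 0 = 1)
    (hBsucc : ∀ i : Fin m, B (i + 1) = B i +
      (shat i ⬝ᵥ s i)⁻¹ • vecMulVec (y i - B i *ᵥ s i) (shat i))
    {z : n → K} (hz : ∀ j, shat j ⬝ᵥ z = 0) : ∀ k ≤ m, B k *ᵥ z = z := by
  intro k
  induction k with
  | zero => simp [hB0]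
  | succ k ih =>
    intro hk
    rw [← Fin.val_mk hk, hBsucc, add_smul_vecMulVec_mulVec, hz, mul_zero, zero_smul, add_zero]
    exact ih (by omega)

theorem mulVec_eq_of_rankOneUpdate (hperp : ∀ i j, j < i → shat i ⬝ᵥ s j = 0)
    (hne : ∀ i, shat i ⬝ᵥ s i ≠ 0)
    (hBsucc : ∀ i : Fin m, B (i + 1) = B i +
      (shat i ⬝ᵥ s i)⁻¹ • vecMulVec (y i - B i *ᵥ s i) (shat i)) :
    ∀ k ≤ m, ∀ j : Fin m, j < k → B k *ᵥ s j = y j := by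
  intro k
  induction k with
  | zero => simp
  | succ k ih =>
    intro hk j hj
    have hstep := hBsucc ⟨k, hk⟩
    rw [Fin.val_mk] at hstep
    rw [hstep, add_smul_vecMulVec_mulVec]
    rcases Nat.lt_succ_iff_lt_or_eq.mp hj with hjk | hjk
    · rw [ih (by omega) j hjk, hperp ⟨k, hk⟩ j hjk, mul_zero, zero_smul, add_zero]
    · obtain rfl : j = ⟨k, hk⟩ := Fin.ext hjk
      rw [inv_mul_cancel₀ (hne _), one_smul, add_sub_cancel]

end RankOneUpdate

theorem eq_one_add_mul_inv_mul_transpose {ι R : Type*} [Fintype ι] [DecidableEq ι] [CommRing R]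
    [DecidableEq n] {A : Matrix n n R} {S Y : Matrix n ι R} (hG : IsUnit (Sᵀ * S))
    (hAS : A * S = Y) (hA : ∀ z, Sᵀ *ᵥ z = 0 → A *ᵥ z = z) :
    A = 1 + (Y - S) * (Sᵀ * S)⁻¹ * Sᵀ := by
  set P := S * (Sᵀ * S)⁻¹ * Sᵀ
  have hGinv : Sᵀ * S * (Sᵀ * S)⁻¹ = 1 := mul_nonsing_inv _ ((isUnit_iff_isUnit_det _).mp hG)
  have hSP : Sᵀ * (1 - P) = 0 := by
    rw [Matrix.mul_sub, Matrix.mul_one, ← Matrix.mul_assoc, ← Matrix.mul_assoc, hGinv,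
      Matrix.one_mul, sub_self]
  have hAP : A * (1 - P) = 1 - P := by
    ext a b
    exact congrFun (hA (fun c => (1 - P) c b) (funext fun j => congrFun (congrFun hSP j) b)) a
  calc A = A * P + A * (1 - P) := by rw [← Matrix.mul_add, add_sub_cancel, Matrix.mul_one]
    _ = 1 + (Y - S) * (Sᵀ * S)⁻¹ * Sᵀ := by
      rw [hAP, ← hAS]
      simp only [P, Matrix.mul_assoc, Matrix.sub_mul]
      abel

end

theorem stmt_18 (n m : ℕ) (s y : Fin m → (Fin n → ℝ))
    (hli : LinearIndependent ℝ s)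
    (shat : Fin m → (Fin n → ℝ))
    (hshat : ∀ i : Fin m, shat i = s i -
      ∑ j ∈ Finset.univ.filter (fun j => j < i),
        ((shat j ⬝ᵥ s i) / (shat j ⬝ᵥ shat j)) • shat j)
    (B : ℕ → Matrix (Fin n) (Fin n) ℝ) (hB0 : B 0 = 1)
    (hBsucc : ∀ i : Fin m, B (i + 1) = B i +
      (shat i ⬝ᵥ s i)⁻¹ • Matrix.vecMulVec (y i - (B i).mulVec (s i)) (shat i))
    (S Y : Matrix (Fin n) (Fin m) ℝ)
    (hS : S = Matrix.of fun (a : Fin n) (j : Fin m) => s j a)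
    (hY : Y = Matrix.of fun (a : Fin n) (j : Fin m) => y j a) :
    B m = 1 + (Y - S) * (S.transpose * S)⁻¹ * S.transpose ∧
    B m * S = Y ∧
    (∀ z : Fin n → ℝ, (∀ j : Fin m, s j ⬝ᵥ z = 0) → (B m).mulVec z = z) := by
  subst hS hY
  have hGS : IsGramSchmidt s shat := hshat
  have hsecant : B m * of (fun a j => s j a) = of (fun a j => y j a) := by
    ext a j
    exact congrFun (mulVec_eq_of_rankOneUpdate (fun _ _ => hGS.dotProduct_eq_zero_of_lt)
      (hGS.dotProduct_self_ne_zero hli) hBsucc m le_rfl j j.isLt) a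
  have hfix : ∀ z : Fin n → ℝ, (∀ j, s j ⬝ᵥ z = 0) → B m *ᵥ z = z := fun z hz =>
    mulVec_eq_self_of_rankOneUpdate hB0 hBsucc (hGS.dotProduct_eq_zero_of_orthogonal hz) m le_rfl
  have hG : IsUnit ((of fun a j => s j a)ᵀ * of fun a j => s j a) := by
    rw [← conjTranspose_eq_transpose_of_trivial]
    exact (PosDef.conjTranspose_mul_self _ (mulVec_injective_iff.mpr hli)).isUnit
  exact ⟨eq_one_add_mul_inv_mul_transpose hG hsecant (fun z hz => hfix z (congrFun hz)),
    hsecant, hfix⟩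
end
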